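/- Let φ : G → ℝ be a homogeneous quasi-morphism with defect D, and let g ∈ [G,G] be a product of N commutators. Then |φ(g)| ≤ 2·N·D. Consequently, |φ(g)| ≤ 2·D·cl(g) for every element g of the commutator subgroup, where cl denotes commutator length. -/

import Mathlib

/-- `g` is a product of `n` commutators. -/
def IsCommProd {G : Type*} [Group G] (n : ℕ) (g : G) : Prop :=
  ∃ a b : Fin n → G, g = (List.ofFn fun i => a i * b i * (a i)⁻¹ * (b i)⁻¹).prod

/-- Commutator length: the minimal number of commutators whose product is `g`. -/
noncomputable def cl {G : Type*} [Group G] (g : G) : ℕ :=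
  sInf {n : ℕ | IsCommProd n g}

open Filter in
/-- Stable commutator length. -/
noncomputable def scl {G : Type*} [Group G] (g : G) : ℝ :=
  limUnder atTop (fun n : ℕ => (cl (g ^ n) : ℝ) / n)

/-!
A homogeneous quasi-morphism is conjugation invariant: replacing `g` by `gⁿ` multiplies
`φ (a g a⁻¹) - φ g` by `n`, while two applications of the defect bound keep it within `2D`.
Hence `φ ⁅a, b⁆` is within `D` of `φ (a b a⁻¹) + φ b⁻¹ = 0`, and a product of `N` commutators
costs at most `D` per factor plus `D` per multiplication.
-/

open scoped commutatorElement

lemma eq_of_forall_natCast_mul_abs_sub_le {K : Type*} [Field K] [LinearOrder K]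
    [IsStrictOrderedRing K] [Archimedean K] {x y C : K} (h : ∀ n : ℕ, n * |x - y| ≤ C) :
    x = y := by
  by_contra hne
  have hpos : 0 < |x - y| := abs_pos.mpr (sub_ne_zero.mpr hne)
  obtain ⟨n, hn⟩ := exists_nat_gt (C / |x - y|)
  rw [div_lt_iff₀ hpos] at hn
  exact (h n).not_gt hn

section Quasimorphism

variable {G : Type*} [Group G] {φ : G → ℝ} {D : ℝ}

lemma map_one_of_map_zpow (hhom : ∀ (g : G) (k : ℤ), φ (g ^ k) = (k : ℝ) * φ g) : φ 1 = 0 := by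
  simpa using hhom 1 0

lemma map_inv_of_map_zpow (hhom : ∀ (g : G) (k : ℤ), φ (g ^ k) = (k : ℝ) * φ g) (g : G) :
    φ g⁻¹ = -φ g := by
  simpa using hhom g (-1)

lemma abs_map_mul_mul_sub_le (hD : ∀ g h : G, |φ (g * h) - φ g - φ h| ≤ D) (x y z : G) :
    |φ (x * y * z) - φ x - φ y - φ z| ≤ 2 * D :=
  calc |φ (x * y * z) - φ x - φ y - φ z|
      = |(φ (x * y * z) - φ (x * y) - φ z) + (φ (x * y) - φ x - φ y)| := by ring_nf
    _ ≤ D + D := (abs_add_le _ _).trans (add_le_add (hD _ _) (hD _ _))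
    _ = 2 * D := by ring

lemma map_conj_of_quasimorphism (hD : ∀ g h : G, |φ (g * h) - φ g - φ h| ≤ D)
    (hhom : ∀ (g : G) (k : ℤ), φ (g ^ k) = (k : ℝ) * φ g) (a g : G) :
    φ (a * g * a⁻¹) = φ g := by
  refine eq_of_forall_natCast_mul_abs_sub_le (C := 2 * D) fun n => ?_
  have h := abs_map_mul_mul_sub_le hD a (g ^ (n : ℤ)) a⁻¹
  rw [← conj_zpow, hhom, hhom, map_inv_of_map_zpow hhom] at h
  calc (n : ℝ) * |φ (a * g * a⁻¹) - φ g|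
      = |(n : ℤ) * φ (a * g * a⁻¹) - φ a - (n : ℤ) * φ g - -φ a| := by
        rw [← Nat.abs_cast, ← abs_mul]; push_cast; ring_nf
    _ ≤ 2 * D := h

lemma abs_map_commutatorElement_le (hD : ∀ g h : G, |φ (g * h) - φ g - φ h| ≤ D)
    (hhom : ∀ (g : G) (k : ℤ), φ (g ^ k) = (k : ℝ) * φ g) (a b : G) :
    |φ ⁅a, b⁆| ≤ D := by
  have h := hD (a * b * a⁻¹) b⁻¹
  rwa [map_conj_of_quasimorphism hD hhom, map_inv_of_map_zpow hhom, ← commutatorElement_def,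
    sub_neg_eq_add, sub_add_cancel] at h

lemma abs_map_list_prod_le (hD : ∀ g h : G, |φ (g * h) - φ g - φ h| ≤ D) (h1 : φ 1 = 0)
    {C : ℝ} {l : List G} (hl : ∀ x ∈ l, |φ x| ≤ C) :
    |φ l.prod| ≤ l.length * (C + D) := by
  induction l with
  | nil => simp [h1]
  | cons x l ih =>
    have hx := hl x List.mem_cons_self
    have hrest := ih fun y hy => hl y (List.mem_cons_of_mem _ hy)
    have hmul := hD x l.prod
    rw [List.prod_cons, List.length_cons, Nat.cast_succ]
    calc |φ (x * l.prod)|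
        = |(φ (x * l.prod) - φ x - φ l.prod) + φ x + φ l.prod| := by ring_nf
      _ ≤ |φ (x * l.prod) - φ x - φ l.prod| + |φ x| + |φ l.prod| := abs_add_three _ _ _
      _ ≤ D + C + l.length * (C + D) := by gcongr
      _ = (l.length + 1) * (C + D) := by ring

end Quasimorphism

section CommutatorLength

variable {G : Type*} [Group G]

lemma isCommProd_zero_one : IsCommProd 0 (1 : G) :=
  ⟨Fin.elim0, Fin.elim0, rfl⟩

lemma isCommProd_one_commutatorElement (a b : G) : IsCommProd 1 ⁅a, b⁆ :=
  ⟨fun _ => a, fun _ => b, by simp [commutatorElement_def]⟩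

lemma IsCommProd.mul {m n : ℕ} {g h : G} (hg : IsCommProd m g) (hh : IsCommProd n h) :
    IsCommProd (m + n) (g * h) := by
  obtain ⟨a, b, rfl⟩ := hg
  obtain ⟨c, d, rfl⟩ := hh
  refine ⟨Fin.append a c, Fin.append b d, ?_⟩
  rw [← List.prod_append, ← List.ofFn_fin_append]
  congr 2
  funext i
  induction i using Fin.addCases <;> simp

lemma exists_isCommProd_of_mem_commutator {g : G} (hg : g ∈ commutator G) :
    ∃ n, IsCommProd n g := by
  rw [commutator_eq_closure] at hg
  induction hg using Subgroup.closure_induction'' with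
  | mem _ hx =>
    obtain ⟨a, b, rfl⟩ := hx
    exact ⟨1, isCommProd_one_commutatorElement a b⟩
  | inv_mem _ hx =>
    obtain ⟨a, b, rfl⟩ := hx
    exact ⟨1, commutatorElement_inv a b ▸ isCommProd_one_commutatorElement b a⟩
  | one => exact ⟨0, isCommProd_zero_one⟩
  | mul _ _ _ _ hx hy =>
    obtain ⟨m, hm⟩ := hx
    obtain ⟨n, hn⟩ := hy
    exact ⟨m + n, hm.mul hn⟩

lemma isCommProd_cl {g : G} (hg : g ∈ commutator G) : IsCommProd (cl g) g :=
  Nat.sInf_mem (exists_isCommProd_of_mem_commutator hg)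

end CommutatorLength

theorem homogeneous_quasimorphism_cl_bound {G : Type*} [Group G] (φ : G → ℝ) (D : ℝ)
    (hD : ∀ g h : G, |φ (g * h) - φ g - φ h| ≤ D)
    (hhom : ∀ (g : G) (k : ℤ), φ (g ^ k) = (k : ℝ) * φ g) :
    (∀ (N : ℕ) (g : G), IsCommProd N g → |φ g| ≤ 2 * N * D) ∧
    (∀ g ∈ commutator G, |φ g| ≤ 2 * D * cl g) := by
  have hprod (N : ℕ) (g : G) (hg : IsCommProd N g) : |φ g| ≤ 2 * N * D := by
    obtain ⟨a, b, rfl⟩ := hg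
    have hfactors : ∀ x ∈ List.ofFn fun i => a i * b i * (a i)⁻¹ * (b i)⁻¹, |φ x| ≤ D := by
      intro x hx
      obtain ⟨i, rfl⟩ := List.mem_ofFn.mp hx
      exact abs_map_commutatorElement_le hD hhom (a i) (b i)
    calc _ ≤ _ := abs_map_list_prod_le hD (map_one_of_map_zpow hhom) hfactors
      _ = 2 * N * D := by rw [List.length_ofFn]; ring
  refine ⟨hprod, fun g hg => ?_⟩
  calc |φ g| ≤ 2 * cl g * D := hprod _ g (isCommProd_cl hg)
    _ = 2 * D * cl g := by ring
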